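/- Fix n ≥ 1 and strict partitions λ, μ with λ_i ≤ μ_i for all i and μ_1 ≤ n. The map f defined by f(T) = {(x, x+j−i) : (i,j) ∈ D'_λ, x ∈ T(i,j)} is a bijection from the set T'_λ(μ) of set-valued shifted tableaux of shape λ restricted by μ onto the set E'_λ(μ) of excited shifted Young diagrams of D'_λ in D'_μ (with the type B_n/C_n excitation rules). -/
import Mathlib


/-- `μ` is a strict partition with exactly `r` (positive, strictly decreasing) parts. -/
def IsStrictPartition (r : ℕ) (μ : ℕ → ℕ) : Prop :=
  (∀ i : ℕ, 1 ≤ i → i < r → μ (i + 1) < μ i) ∧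
  (∀ i : ℕ, 1 ≤ i → i ≤ r → 0 < μ i) ∧
  (∀ i : ℕ, r < i → μ i = 0)

/-- The box `b` lies in the shifted Young diagram `D'_μ`:
`1 ≤ i ≤ j ≤ i + μᵢ − 1`. -/
def inDS (μ : ℕ → ℕ) (b : ℕ × ℕ) : Prop :=
  1 ≤ b.1 ∧ b.1 ≤ b.2 ∧ b.2 + 1 ≤ b.1 + μ b.1

/-- One excitation step (type 1 or type 2, with the type `Bₙ`/`Cₙ` diagonal rule) on
subsets of the shifted Young diagram `D'_μ`. -/
def ExcStepBC (μ : ℕ → ℕ) (C C' : Finset (ℕ × ℕ)) : Prop :=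
  (∃ i j : ℕ, i < j ∧ (i, j) ∈ C ∧
    inDS μ (i + 1, j) ∧ (i + 1, j) ∉ C ∧
    inDS μ (i, j + 1) ∧ (i, j + 1) ∉ C ∧
    inDS μ (i + 1, j + 1) ∧ (i + 1, j + 1) ∉ C ∧
    (C' = (C.erase (i, j)) ∪ {(i + 1, j + 1)} ∨ C' = C ∪ {(i + 1, j + 1)})) ∨
  (∃ i : ℕ, (i, i) ∈ C ∧
    inDS μ (i, i + 1) ∧ (i, i + 1) ∉ C ∧
    inDS μ (i + 1, i + 1) ∧ (i + 1, i + 1) ∉ C ∧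
    (C' = (C.erase (i, i)) ∪ {(i + 1, i + 1)} ∨ C' = C ∪ {(i + 1, i + 1)}))

/-- The shifted Young diagram `D'_lam` as a finset (rows at most `n`). -/
def DfinS (n : ℕ) (lam : ℕ → ℕ) : Finset (ℕ × ℕ) :=
  ((Finset.Icc 1 n) ×ˢ (Finset.Icc 1 (2 * n))).filter
    (fun b => b.1 ≤ b.2 ∧ b.2 + 1 ≤ b.1 + lam b.1)

/-- A set-valued shifted tableau of shape `lam`: a function assigning to each box of
`D'_lam` a nonempty subset of `{1, …, n}` (and `∅` off the diagram), which is
semistandard: entries weakly increase along rows and strictly increase down columns. -/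
def IsSSVT (n : ℕ) (lam : ℕ → ℕ) (T : ℕ × ℕ → Finset ℕ) : Prop :=
  (∀ b, inDS lam b → (T b).Nonempty) ∧
  (∀ b, inDS lam b → ∀ x ∈ T b, 1 ≤ x ∧ x ≤ n) ∧
  (∀ b, ¬ inDS lam b → T b = ∅) ∧
  (∀ i j : ℕ, inDS lam (i, j) → inDS lam (i, j + 1) →
    ∀ x ∈ T (i, j), ∀ y ∈ T (i, j + 1), x ≤ y) ∧
  (∀ i j : ℕ, inDS lam (i, j) → inDS lam (i + 1, j) →
    ∀ x ∈ T (i, j), ∀ y ∈ T (i + 1, j), x < y)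

/-- The shifted tableau `T` is restricted by `μ`: `j − i ≤ μ_x − 1` for each box `(i,j)`
of `D'_lam` and each entry `x` of that box. -/
def SRestrictedBy (lam μ : ℕ → ℕ) (T : ℕ × ℕ → Finset ℕ) : Prop :=
  ∀ i j : ℕ, inDS lam (i, j) → ∀ x ∈ T (i, j), j + 1 ≤ i + μ x

/-- The map `f` sending a set-valued shifted tableau of shape `lam` to a subset of
`D'_μ`: `f(T) = {(x, x+j−i) : (i,j) ∈ D'_lam, x ∈ T(i,j)}`. -/
def sfmap (n : ℕ) (lam : ℕ → ℕ) (T : ℕ × ℕ → Finset ℕ) : Finset (ℕ × ℕ) :=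
  (DfinS n lam).biUnion (fun b => (T b).image (fun x => (x, x + b.2 - b.1)))

/-! ### Auxiliary lemmas -/


lemma sp_le {r : ℕ} {ρ : ℕ → ℕ} (h : IsStrictPartition r ρ) (i : ℕ) :
    ∀ k, 1 ≤ i → i ≤ k → 1 ≤ ρ k → ρ k + (k - i) ≤ ρ i := by
  obtain ⟨h1, _h2, h3⟩ := h
  intro k
  induction k with
  | zero => intro hi hik hk; omega
  | succ m ih =>
    intro hi hik hk
    rcases Nat.lt_or_ge i (m+1) with hlt | hge
    · have hmr : m + 1 ≤ r := by
        by_contra hc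
        have := h3 (m+1) (by omega); omega
      have hdec : ρ (m+1) < ρ m := h1 m (by omega) (by omega)
      have := ih hi (by omega) (by omega)
      omega
    · have hi' : i = m + 1 := by omega
      subst hi'; omega

lemma sp_pos_le {r : ℕ} {ρ : ℕ → ℕ} (h : IsStrictPartition r ρ) {i k : ℕ}
    (hi : 1 ≤ i) (hik : i ≤ k) (hk : 1 ≤ ρ k) : ρ k ≤ ρ i := by
  have := sp_le h i k hi hik hk; omega

lemma sp_strict {r : ℕ} {ρ : ℕ → ℕ} (h : IsStrictPartition r ρ) {i : ℕ}
    (hi : 1 ≤ i) (h1 : 1 ≤ ρ (i+1)) : ρ (i+1) < ρ i := by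
  have hir : i + 1 ≤ r := by
    by_contra hc
    have := h.2.2 (i+1) (by omega); omega
  exact h.1 i hi (by omega)

section Main

variable {n rlam rμ : ℕ} {lam μ : ℕ → ℕ}

lemma mem_DfinS (hlam : IsStrictPartition rlam lam) (hμ : IsStrictPartition rμ μ)
    (hμ1 : μ 1 ≤ n) (hle : ∀ i, lam i ≤ μ i) {b : ℕ × ℕ} :
    b ∈ DfinS n lam ↔ inDS lam b := by
  unfold DfinS inDS
  simp only [Finset.mem_filter, Finset.mem_product, Finset.mem_Icc]
  constructor
  · rintro ⟨⟨⟨h1, _⟩, _, _⟩, h5, h6⟩; exact ⟨h1, h5, h6⟩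
  · rintro ⟨h1, h2, h3⟩
    have hl1 : 1 ≤ lam b.1 := by omega
    have hb1n : b.1 ≤ n := by
      have h4 := sp_le hlam 1 b.1 le_rfl h1 hl1
      have h5 := hle 1
      omega
    have hlan : lam b.1 ≤ n := by
      have hμpos : 1 ≤ μ b.1 := le_trans hl1 (hle b.1)
      have h6 := sp_pos_le hμ (le_refl 1) h1 hμpos
      have := hle b.1; omega
    exact ⟨⟨⟨h1, hb1n⟩, by omega, by omega⟩, h2, h3⟩

lemma mem_sfmap (hlam : IsStrictPartition rlam lam) (hμ : IsStrictPartition rμ μ)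
    (hμ1 : μ 1 ≤ n) (hle : ∀ i, lam i ≤ μ i) {T : ℕ × ℕ → Finset ℕ} {a c : ℕ} :
    (a, c) ∈ sfmap n lam T ↔ ∃ p d, inDS lam (p, p + d) ∧ a ∈ T (p, p + d) ∧ c = a + d := by
  unfold sfmap
  simp only [Finset.mem_biUnion, Finset.mem_image]
  constructor
  · rintro ⟨⟨b1, b2⟩, hb, x, hx, heq⟩
    rw [mem_DfinS hlam hμ hμ1 hle] at hb
    obtain ⟨h1, h2, h3⟩ := hb
    rw [Prod.mk.injEq] at heq
    obtain ⟨rfl, hc⟩ := heq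
    refine ⟨b1, b2 - b1, ?_, ?_, by simp at h2 ⊢; omega⟩
    · have hb2 : b1 + (b2 - b1) = b2 := by simp at h2 ⊢; omega
      rw [hb2]; exact ⟨h1, h2, h3⟩
    · have hb2 : b1 + (b2 - b1) = b2 := by simp at h2 ⊢; omega
      rw [hb2]; exact hx
  · rintro ⟨p, d, hbox, ha, rfl⟩
    refine ⟨(p, p + d), (mem_DfinS hlam hμ hμ1 hle).mpr hbox, a, ha, ?_⟩
    rw [Prod.mk.injEq]
    constructor
    · rfl
    · simp; omega

lemma mem_sfmap_diag (hlam : IsStrictPartition rlam lam) (hμ : IsStrictPartition rμ μ)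
    (hμ1 : μ 1 ≤ n) (hle : ∀ i, lam i ≤ μ i) {T : ℕ × ℕ → Finset ℕ} {x d : ℕ} :
    (x, x + d) ∈ sfmap n lam T ↔ ∃ p, inDS lam (p, p + d) ∧ x ∈ T (p, p + d) := by
  rw [mem_sfmap hlam hμ hμ1 hle]
  constructor
  · rintro ⟨p, d', hbox, ha, hd⟩
    have : d' = d := by omega
    subst this
    exact ⟨p, hbox, ha⟩
  · rintro ⟨p, hbox, ha⟩
    exact ⟨p, d, hbox, ha, rfl⟩

end Main

section Tab

lemma inDS_def {rho : ℕ → ℕ} {p q : ℕ} :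
    inDS rho (p, q) ↔ (1 ≤ p ∧ p ≤ q ∧ q + 1 ≤ p + rho p) := Iff.rfl

variable {n rlam rμ : ℕ} {lam μ : ℕ → ℕ} {T : ℕ × ℕ → Finset ℕ}

lemma diag_step (hlam : IsStrictPartition rlam lam) (hT : IsSSVT n lam T)
    {p d a b : ℕ} (h1 : inDS lam (p, p + d)) (h2 : inDS lam (p + 1, p + 1 + d))
    (ha : a ∈ T (p, p + d)) (hb : b ∈ T (p + 1, p + 1 + d)) : a < b := by
  obtain ⟨hp1, _, hpl⟩ := inDS_def.mp h1
  obtain ⟨_, _, hpl2⟩ := inDS_def.mp h2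
  have hstr : lam (p + 1) < lam p := sp_strict hlam hp1 (by omega)
  have hm : inDS lam (p, p + d + 1) := inDS_def.mpr ⟨hp1, by omega, by omega⟩
  obtain ⟨c, hc⟩ := hT.1 _ hm
  have hac : a ≤ c :=
    hT.2.2.2.1 p (p + d) (inDS_def.mpr ⟨hp1, by omega, by omega⟩) hm a ha c hc
  have hcb : c < b := by
    have := hT.2.2.2.2 p (p + d + 1) hm ?_ c hc b ?_
    · exact this
    · rw [show p + 1 + d = p + d + 1 by omega] at h2
      exact h2
    · rw [show p + 1 + d = p + d + 1 by omega] at hb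
      exact hb
  omega

lemma diag_lt_gen (hlam : IsStrictPartition rlam lam) (hT : IsSSVT n lam T) :
    ∀ p' p d a b : ℕ, p < p' → inDS lam (p, p + d) → inDS lam (p', p' + d) →
      a ∈ T (p, p + d) → b ∈ T (p', p' + d) → a < b := by
  intro p'
  induction p' with
  | zero => intro p d a b h; omega
  | succ m ih =>
    intro p d a b hpp h1 h2 ha hb
    rcases Nat.lt_or_ge p m with hlt | hge
    · have hm1 : 1 ≤ m := by omega
      have hm : inDS lam (m, m + d) := by
        obtain ⟨_, _, h2l⟩ := inDS_def.mp h2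
        have : lam (m + 1) ≤ lam m := sp_pos_le hlam hm1 (by omega) (by omega)
        exact inDS_def.mpr ⟨hm1, by omega, by omega⟩
      obtain ⟨c, hc⟩ := hT.1 _ hm
      exact lt_trans (ih p d a c hlt h1 hm ha hc) (diag_step hlam hT hm h2 hc hb)
    · have : p = m := by omega
      subst this
      exact diag_step hlam hT h1 h2 ha hb

lemma entry_row_le (hlam : IsStrictPartition rlam lam) (hT : IsSSVT n lam T) :
    ∀ p d a : ℕ, inDS lam (p, p + d) → a ∈ T (p, p + d) → p ≤ a := by
  intro p
  induction p with
  | zero => intro d a _ _; omega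
  | succ m ih =>
    intro d a h1 ha
    rcases Nat.eq_zero_or_pos m with rfl | hm
    · exact (hT.2.1 _ h1 a ha).1
    · have hbm : inDS lam (m, m + d) := by
        obtain ⟨_, _, h1l⟩ := inDS_def.mp h1
        have : lam (m + 1) ≤ lam m := sp_pos_le hlam hm (by omega) (by omega)
        exact inDS_def.mpr ⟨hm, by omega, by omega⟩
      obtain ⟨c, hc⟩ := hT.1 _ hbm
      have h2 := ih d c hbm hc
      have h3 := diag_step hlam hT hbm h1 hc ha
      omega

lemma diag_unique (hlam : IsStrictPartition rlam lam) (hT : IsSSVT n lam T)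
    {p p' d x : ℕ} (h1 : inDS lam (p, p + d)) (h2 : inDS lam (p', p' + d))
    (hx1 : x ∈ T (p, p + d)) (hx2 : x ∈ T (p', p' + d)) : p = p' := by
  rcases lt_trichotomy p p' with h | h | h
  · have := diag_lt_gen hlam hT p' p d x x h h1 h2 hx1 hx2; omega
  · exact h
  · have := diag_lt_gen hlam hT p p' d x x h h2 h1 hx2 hx1; omega

/-- entries of a box strictly below-left on the adjacent lower diagonal are larger -/
lemma hook_lt (hlam : IsStrictPartition rlam lam) (hT : IsSSVT n lam T)
    {r s d a b : ℕ} (hrs : r < s) (h1 : inDS lam (r, r + (d + 1)))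
    (h2 : inDS lam (s, s + d)) (ha : a ∈ T (r, r + (d + 1))) (hb : b ∈ T (s, s + d)) :
    a < b := by
  have hmid : inDS lam (r + 1, r + 1 + d) := by
    obtain ⟨hr1, _, _⟩ := inDS_def.mp h1
    obtain ⟨hs1, _, h2l⟩ := inDS_def.mp h2
    have : lam s ≤ lam (r + 1) := sp_pos_le hlam (by omega) (by omega) (by omega)
    exact inDS_def.mpr ⟨by omega, by omega, by omega⟩
  have hcol : ∀ c ∈ T (r + 1, r + 1 + d), a < c := by
    intro c hc
    have hmid' : inDS lam (r + 1, r + d + 1) := by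
      rw [show r + 1 + d = r + d + 1 by omega] at hmid; exact hmid
    have hc' : c ∈ T (r + 1, r + d + 1) := by
      rw [show r + 1 + d = r + d + 1 by omega] at hc; exact hc
    exact hT.2.2.2.2 r (r + d + 1) h1 hmid' a ha c hc'
  rcases Nat.lt_or_ge (r + 1) s with hlt | hge
  · obtain ⟨c, hc⟩ := hT.1 _ hmid
    exact lt_trans (hcol c hc) (diag_lt_gen hlam hT s (r+1) d c b hlt hmid h2 hc hb)
  · have hs : s = r + 1 := by omega
    subst hs
    exact hcol b hb

/-- entries of a box strictly below on the adjacent upper diagonal are larger -/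
lemma antihook_lt (hlam : IsStrictPartition rlam lam) (hT : IsSSVT n lam T)
    {r s d a b : ℕ} (hrs : r < s) (h1 : inDS lam (r, r + d))
    (h2 : inDS lam (s, s + (d + 1))) (ha : a ∈ T (r, r + d)) (hb : b ∈ T (s, s + (d + 1))) :
    a < b := by
  have hmid : inDS lam (r, r + (d + 1)) := by
    obtain ⟨hr1, _, _⟩ := inDS_def.mp h1
    obtain ⟨hs1, _, h2l⟩ := inDS_def.mp h2
    have : lam s ≤ lam r := sp_pos_le hlam (by omega) (by omega) (by omega)
    exact inDS_def.mpr ⟨hr1, by omega, by omega⟩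
  obtain ⟨c, hc⟩ := hT.1 _ hmid
  have hac : a ≤ c := hT.2.2.2.1 r (r + d) h1 hmid a ha c hc
  have hcb : c < b := diag_lt_gen hlam hT s r (d+1) c b hrs hmid h2 hc hb
  omega

end Tab

section Upd

variable {n rlam rμ : ℕ} {lam μ : ℕ → ℕ} {T : ℕ × ℕ → Finset ℕ}

lemma update_valid (hT : IsSSVT n lam T) (hR : SRestrictedBy lam μ T)
    {p q : ℕ} (hB : inDS lam (p, q)) (s : Finset ℕ)
    (hsne : s.Nonempty)
    (hbd : ∀ y ∈ s, 1 ≤ y ∧ y ≤ n)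
    (hres : ∀ y ∈ s, q + 1 ≤ p + μ y)
    (hL : ∀ z ∈ T (p, q - 1), inDS lam (p, q - 1) → ∀ y ∈ s, z ≤ y)
    (hRt : ∀ y ∈ s, inDS lam (p, q + 1) → ∀ z ∈ T (p, q + 1), y ≤ z)
    (hU : ∀ z ∈ T (p - 1, q), inDS lam (p - 1, q) → ∀ y ∈ s, z < y)
    (hD : ∀ y ∈ s, inDS lam (p + 1, q) → ∀ z ∈ T (p + 1, q), y < z) :
    IsSSVT n lam (Function.update T (p, q) s) ∧
      SRestrictedBy lam μ (Function.update T (p, q) s) := by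
  classical
  have hq1 : 1 ≤ q := le_trans hB.1 hB.2.1
  refine ⟨⟨?_, ?_, ?_, ?_, ?_⟩, ?_⟩
  · intro b hb
    by_cases h : b = (p, q)
    · rw [h, Function.update_self]; exact hsne
    · rw [Function.update_of_ne h]; exact hT.1 b hb
  · intro b hb x hx
    by_cases h : b = (p, q)
    · rw [h, Function.update_self] at hx; exact hbd x hx
    · rw [Function.update_of_ne h] at hx; exact hT.2.1 b hb x hx
  · intro b hb
    have h : b ≠ (p, q) := fun he => hb (he ▸ hB)
    rw [Function.update_of_ne h]; exact hT.2.2.1 b hb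
  · -- rows
    intro i j h1 h2 x hx y hy
    by_cases hij : (i, j) = (p, q)
    · rw [Prod.mk.injEq] at hij
      obtain ⟨rfl, rfl⟩ := hij
      rw [Function.update_self] at hx
      have hne : (i, j + 1) ≠ (i, j) := by intro h; rw [Prod.mk.injEq] at h; omega
      rw [Function.update_of_ne hne] at hy
      exact hRt x hx h2 y hy
    · rw [Function.update_of_ne hij] at hx
      by_cases hij1 : (i, j + 1) = (p, q)
      · rw [Prod.mk.injEq] at hij1
        obtain ⟨rfl, hjq⟩ := hij1
        have hjq' : j = q - 1 := by omega
        subst hjq'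
        rw [hjq, Function.update_self] at hy
        exact hL x hx h1 y hy
      · rw [Function.update_of_ne hij1] at hy
        exact hT.2.2.2.1 i j h1 h2 x hx y hy
  · -- cols
    intro i j h1 h2 x hx y hy
    by_cases hij : (i, j) = (p, q)
    · rw [Prod.mk.injEq] at hij
      obtain ⟨rfl, rfl⟩ := hij
      rw [Function.update_self] at hx
      have hne : (i + 1, j) ≠ (i, j) := by intro h; rw [Prod.mk.injEq] at h; omega
      rw [Function.update_of_ne hne] at hy
      exact hD x hx h2 y hy
    · rw [Function.update_of_ne hij] at hx
      by_cases hij1 : (i + 1, j) = (p, q)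
      · rw [Prod.mk.injEq] at hij1
        obtain ⟨hip, rfl⟩ := hij1
        have hip' : i = p - 1 := by omega
        subst hip'
        rw [hip, Function.update_self] at hy
        exact hU x hx h1 y hy
      · rw [Function.update_of_ne hij1] at hy
        exact hT.2.2.2.2 i j h1 h2 x hx y hy
  · -- restricted
    intro i j h1 x hx
    by_cases hij : (i, j) = (p, q)
    · rw [Prod.mk.injEq] at hij
      obtain ⟨rfl, rfl⟩ := hij
      rw [Function.update_self] at hx
      exact hres x hx
    · rw [Function.update_of_ne hij] at hx
      exact hR i j h1 x hx

lemma sfmap_erase (hlam : IsStrictPartition rlam lam) (hμ : IsStrictPartition rμ μ)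
    (hμ1 : μ 1 ≤ n) (hle : ∀ i, lam i ≤ μ i) (hT : IsSSVT n lam T)
    {p d x : ℕ} (hB : inDS lam (p, p + d)) (hx : x ∈ T (p, p + d)) :
    sfmap n lam (Function.update T (p, p + d) ((T (p, p + d)).erase x)) =
      (sfmap n lam T).erase (x, x + d) := by
  classical
  ext ⟨a, c⟩
  rw [Finset.mem_erase, mem_sfmap hlam hμ hμ1 hle, mem_sfmap hlam hμ hμ1 hle]
  constructor
  · rintro ⟨q, e, hbox, ha, hc⟩
    by_cases hqB : (q, q + e) = (p, p + d)
    · rw [Prod.mk.injEq] at hqB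
      have hqe : q = p ∧ e = d := by omega
      obtain ⟨rfl, rfl⟩ := hqe
      rw [Function.update_self, Finset.mem_erase] at ha
      refine ⟨?_, q, e, hbox, ha.2, hc⟩
      intro h; rw [Prod.mk.injEq] at h; exact ha.1 h.1
    · rw [Function.update_of_ne hqB] at ha
      refine ⟨?_, q, e, hbox, ha, hc⟩
      intro h; rw [Prod.mk.injEq] at h
      obtain ⟨rfl, h2⟩ := h
      have he : e = d := by omega
      subst he
      exact hqB (by rw [diag_unique hlam hT hbox hB ha hx])
  · rintro ⟨hne, q, e, hbox, ha, hc⟩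
    by_cases hqB : (q, q + e) = (p, p + d)
    · rw [Prod.mk.injEq] at hqB
      have hqe : q = p ∧ e = d := by omega
      obtain ⟨rfl, rfl⟩ := hqe
      have hax : a ≠ x := by
        intro h; subst h; exact hne (by rw [Prod.mk.injEq]; exact ⟨rfl, by omega⟩)
      refine ⟨q, e, hbox, ?_, hc⟩
      rw [Function.update_self, Finset.mem_erase]
      exact ⟨hax, ha⟩
    · exact ⟨q, e, hbox, by rw [Function.update_of_ne hqB]; exact ha, hc⟩

lemma sfmap_insert (hlam : IsStrictPartition rlam lam) (hμ : IsStrictPartition rμ μ)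
    (hμ1 : μ 1 ≤ n) (hle : ∀ i, lam i ≤ μ i)
    {p d y : ℕ} (hB : inDS lam (p, p + d)) :
    sfmap n lam (Function.update T (p, p + d) (insert y (T (p, p + d)))) =
      insert (y, y + d) (sfmap n lam T) := by
  classical
  ext ⟨a, c⟩
  rw [Finset.mem_insert, mem_sfmap hlam hμ hμ1 hle, mem_sfmap hlam hμ hμ1 hle]
  constructor
  · rintro ⟨q, e, hbox, ha, hc⟩
    by_cases hqB : (q, q + e) = (p, p + d)
    · rw [Prod.mk.injEq] at hqB
      have hqe : q = p ∧ e = d := by omega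
      obtain ⟨rfl, rfl⟩ := hqe
      rw [Function.update_self, Finset.mem_insert] at ha
      rcases ha with rfl | ha
      · exact Or.inl (by rw [Prod.mk.injEq]; exact ⟨rfl, by omega⟩)
      · exact Or.inr ⟨q, e, hbox, ha, hc⟩
    · rw [Function.update_of_ne hqB] at ha
      exact Or.inr ⟨q, e, hbox, ha, hc⟩
  · rintro (h | ⟨q, e, hbox, ha, hc⟩)
    · rw [Prod.mk.injEq] at h
      obtain ⟨rfl, rfl⟩ := h
      exact ⟨p, d, hB, by rw [Function.update_self]; exact Finset.mem_insert_self _ _, rfl⟩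
    · by_cases hqB : (q, q + e) = (p, p + d)
      · rw [Prod.mk.injEq] at hqB
        have hqe : q = p ∧ e = d := by omega
        obtain ⟨rfl, rfl⟩ := hqe
        exact ⟨q, e, hbox, by
          rw [Function.update_self]; exact Finset.mem_insert_of_mem ha, hc⟩
      · exact ⟨q, e, hbox, by rw [Function.update_of_ne hqB]; exact ha, hc⟩

lemma sfmap_replace (hlam : IsStrictPartition rlam lam) (hμ : IsStrictPartition rμ μ)
    (hμ1 : μ 1 ≤ n) (hle : ∀ i, lam i ≤ μ i) (hT : IsSSVT n lam T)
    {p d x y : ℕ} (hB : inDS lam (p, p + d)) (hx : x ∈ T (p, p + d)) :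
    sfmap n lam (Function.update T (p, p + d) (insert y ((T (p, p + d)).erase x))) =
      insert (y, y + d) ((sfmap n lam T).erase (x, x + d)) := by
  classical
  have h1 := sfmap_erase hlam hμ hμ1 hle hT hB hx
  have h2 : Function.update T (p, p + d) (insert y ((T (p, p + d)).erase x)) =
      Function.update (Function.update T (p, p + d) ((T (p, p + d)).erase x)) (p, p + d)
        (insert y ((Function.update T (p, p + d) ((T (p, p + d)).erase x)) (p, p + d))) := by
    rw [Function.update_self, Function.update_idem]
  rw [h2, sfmap_insert hlam hμ hμ1 hle hB, h1]

end Upd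

section Fwd

lemma finset_union_singleton {α : Type*} [DecidableEq α] (s : Finset α) (a : α) :
    s ∪ {a} = insert a s := by
  ext t; simp [Finset.mem_union, Finset.mem_insert, or_comm]

variable {n rlam rμ : ℕ} {lam μ : ℕ → ℕ} {T : ℕ × ℕ → Finset ℕ}

lemma fwd_valid (hlam : IsStrictPartition rlam lam)
    (hT : IsSSVT n lam T) (hR : SRestrictedBy lam μ T)
    {p d i : ℕ} (hB : inDS lam (p, p + d)) (hi : i ∈ T (p, p + d))
    (f1 : ∀ q, inDS lam (q, q + (d + 1)) → i ∉ T (q, q + (d + 1)))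
    (f2 : ∀ q e, e + 1 = d → inDS lam (q, q + e) → i + 1 ∉ T (q, q + e))
    (hn1 : i + 1 ≤ n) (hres1 : d + 1 ≤ μ (i + 1))
    {s : Finset ℕ} (hs : s ⊆ insert (i + 1) (T (p, p + d))) (hi1s : i + 1 ∈ s) :
    IsSSVT n lam (Function.update T (p, p + d) s) ∧
      SRestrictedBy lam μ (Function.update T (p, p + d) s) := by
  apply update_valid hT hR hB
  · exact ⟨i + 1, hi1s⟩
  · intro y hy
    rcases Finset.mem_insert.mp (hs hy) with rfl | hyT
    · exact ⟨by omega, hn1⟩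
    · exact hT.2.1 _ hB y hyT
  · intro y hy
    rcases Finset.mem_insert.mp (hs hy) with rfl | hyT
    · omega
    · exact hR p (p + d) hB y hyT
  · intro z hz hin y hy
    have hp1 : 1 ≤ p := (inDS_def.mp hB).1
    have hd1 : 1 ≤ d := by
      obtain ⟨_, h2, _⟩ := inDS_def.mp hin; omega
    have hrow := hT.2.2.2.1 p (p + d - 1) hin
      (by rw [show p + d - 1 + 1 = p + d by omega]; exact hB) z hz
    rw [show p + d - 1 + 1 = p + d by omega] at hrow
    rcases Finset.mem_insert.mp (hs hy) with rfl | hyT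
    · have := hrow i hi; omega
    · exact hrow y hyT
  · intro y hy hin z hz
    have hiz : i ≤ z := hT.2.2.2.1 p (p + d) hB hin i hi z hz
    rcases Finset.mem_insert.mp (hs hy) with rfl | hyT
    · have hzi : z ≠ i := by
        intro h
        exact f1 p (by rw [show p + (d + 1) = p + d + 1 by omega]; exact hin)
          (by rw [show p + (d + 1) = p + d + 1 by omega]; exact h ▸ hz)
      omega
    · exact hT.2.2.2.1 p (p + d) hB hin y hyT z hz
  · intro z hz hin y hy
    have hp1 : 1 ≤ p := (inDS_def.mp hB).1
    have hcol := hT.2.2.2.2 (p - 1) (p + d) hin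
      (by rw [show p - 1 + 1 = p by omega]; exact hB) z hz
    rw [show p - 1 + 1 = p by omega] at hcol
    have hzi : z < i := hcol i hi
    rcases Finset.mem_insert.mp (hs hy) with rfl | hyT
    · omega
    · exact hcol y hyT
  · intro y hy hin z hz
    have hiz : i < z := hT.2.2.2.2 p (p + d) hB hin i hi z hz
    rcases Finset.mem_insert.mp (hs hy) with rfl | hyT
    · have hd1 : 1 ≤ d := by
        obtain ⟨_, h2, _⟩ := inDS_def.mp hin; omega
      have hne : z ≠ i + 1 := by
        intro h
        exact f2 (p + 1) (d - 1) (by omega)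
          (by rw [show p + 1 + (d - 1) = p + d by omega]; exact hin)
          (by rw [show p + 1 + (d - 1) = p + d by omega]; exact h ▸ hz)
      omega
    · exact hT.2.2.2.2 p (p + d) hB hin y hyT z hz

lemma fwd (hlam : IsStrictPartition rlam lam) (hμ : IsStrictPartition rμ μ)
    (hμ1 : μ 1 ≤ n) (hle : ∀ i, lam i ≤ μ i)
    (hT : IsSSVT n lam T) (hR : SRestrictedBy lam μ T) {C' : Finset (ℕ × ℕ)}
    (hstep : ExcStepBC μ (sfmap n lam T) C') :
    ∃ T', (IsSSVT n lam T' ∧ SRestrictedBy lam μ T') ∧ sfmap n lam T' = C' := by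
  classical
  rcases hstep with ⟨i, j, hij, hmem, hin1, hnm1, hin2, hnm2, hin3, hnm3, hC'⟩ |
    ⟨i, hmem, hin2, hnm2, hin3, hnm3, hC'⟩
  · obtain ⟨p, d, hbox, hip, hjd⟩ := (mem_sfmap hlam hμ hμ1 hle).mp hmem
    subst hjd
    have hd1 : 1 ≤ d := by omega
    have f1 : ∀ q, inDS lam (q, q + (d + 1)) → i ∉ T (q, q + (d + 1)) := by
      intro q hq hmemT
      exact hnm2 ((mem_sfmap hlam hμ hμ1 hle).mpr ⟨q, d + 1, hq, hmemT, by omega⟩)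
    have f2 : ∀ q e, e + 1 = d → inDS lam (q, q + e) → i + 1 ∉ T (q, q + e) := by
      intro q e he hq hmemT
      exact hnm1 ((mem_sfmap hlam hμ hμ1 hle).mpr ⟨q, e, hq, hmemT, by omega⟩)
    have hμi1 : d + 1 ≤ μ (i + 1) := by
      obtain ⟨_, _, h3⟩ := inDS_def.mp hin3; omega
    have hn1 : i + 1 ≤ n := by
      have h4 := sp_le hμ 1 (i + 1) le_rfl (by omega) (by omega)
      omega
    rcases hC' with h | h
    · refine ⟨Function.update T (p, p + d) (insert (i + 1) ((T (p, p + d)).erase i)),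
        fwd_valid hlam hT hR hbox hip f1 f2 hn1 hμi1
        (Finset.insert_subset_insert _ (Finset.erase_subset _ _))
        (Finset.mem_insert_self _ _), ?_⟩
      rw [sfmap_replace hlam hμ hμ1 hle hT hbox hip, h, finset_union_singleton _ _,
        show i + 1 + d = i + d + 1 by omega]
    · refine ⟨_, fwd_valid hlam hT hR hbox hip f1 f2 hn1 hμi1
        (le_refl _) (Finset.mem_insert_self _ _), ?_⟩
      rw [sfmap_insert hlam hμ hμ1 hle hbox, h, finset_union_singleton _ _,
        show i + 1 + d = i + d + 1 by omega]
  · obtain ⟨p, d, hbox, hip, hjd⟩ := (mem_sfmap hlam hμ hμ1 hle).mp hmem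
    have hd0 : d = 0 := by omega
    subst hd0
    have f1 : ∀ q, inDS lam (q, q + (0 + 1)) → i ∉ T (q, q + (0 + 1)) := by
      intro q hq hmemT
      exact hnm2 ((mem_sfmap hlam hμ hμ1 hle).mpr ⟨q, 0 + 1, hq, hmemT, by omega⟩)
    have f2 : ∀ q e, e + 1 = 0 → inDS lam (q, q + e) → i + 1 ∉ T (q, q + e) := by
      intro q e he; omega
    have hμi1 : 0 + 1 ≤ μ (i + 1) := by
      obtain ⟨_, _, h3⟩ := inDS_def.mp hin3; omega
    have hn1 : i + 1 ≤ n := by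
      have h4 := sp_le hμ 1 (i + 1) le_rfl (by omega) (by omega)
      omega
    rcases hC' with h | h
    · refine ⟨Function.update T (p, p + 0) (insert (i + 1) ((T (p, p + 0)).erase i)),
        fwd_valid hlam hT hR hbox hip f1 f2 hn1 hμi1
        (Finset.insert_subset_insert _ (Finset.erase_subset _ _))
        (Finset.mem_insert_self _ _), ?_⟩
      rw [sfmap_replace hlam hμ hμ1 hle hT hbox hip, h, finset_union_singleton _ _,
        show i + 1 + 0 = i + 1 by omega, show i + 0 = i by omega]
    · refine ⟨_, fwd_valid hlam hT hR hbox hip f1 f2 hn1 hμi1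
        (le_refl _) (Finset.mem_insert_self _ _), ?_⟩
      rw [sfmap_insert hlam hμ hμ1 hle hbox, h, finset_union_singleton _ _,
        show i + 1 + 0 = i + 1 by omega]

end Fwd

noncomputable def Msum (n : ℕ) (lam : ℕ → ℕ) (T : ℕ × ℕ → Finset ℕ) : ℕ :=
  ∑ b ∈ DfinS n lam, ∑ x ∈ T b, x

section Rev

variable {n rlam rμ : ℕ} {lam μ : ℕ → ℕ} {T : ℕ × ℕ → Finset ℕ}

lemma Msum_update_lt (hlam : IsStrictPartition rlam lam) (hμ : IsStrictPartition rμ μ)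
    (hμ1 : μ 1 ≤ n) (hle : ∀ i, lam i ≤ μ i) {p d : ℕ} (hB : inDS lam (p, p + d))
    {s : Finset ℕ} (hlt : ∑ y ∈ s, y < ∑ y ∈ T (p, p + d), y) :
    Msum n lam (Function.update T (p, p + d) s) < Msum n lam T := by
  classical
  have hmem : (p, p + d) ∈ DfinS n lam := (mem_DfinS hlam hμ hμ1 hle).mpr hB
  unfold Msum
  rw [← Finset.add_sum_erase _ (fun b => ∑ x ∈ (Function.update T (p, p + d) s) b, x) hmem,
    ← Finset.add_sum_erase _ (fun b => ∑ x ∈ T b, x) hmem]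
  have h1 : ∑ x ∈ (Function.update T (p, p + d) s) (p, p + d), x = ∑ y ∈ s, y := by
    rw [Function.update_self]
  have h2 : ∑ b ∈ (DfinS n lam).erase (p, p + d),
      ∑ x ∈ (Function.update T (p, p + d) s) b, x =
      ∑ b ∈ (DfinS n lam).erase (p, p + d), ∑ x ∈ T b, x :=
    Finset.sum_congr rfl (fun b hb => by
      rw [Function.update_of_ne (Finset.ne_of_mem_erase hb)])
  simp only [h1, h2]
  omega

lemma rev (hlam : IsStrictPartition rlam lam) (hμ : IsStrictPartition rμ μ)
    (hμ1 : μ 1 ≤ n) (hle : ∀ i, lam i ≤ μ i)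
    (hT : IsSSVT n lam T) (hR : SRestrictedBy lam μ T)
    (hnm : ¬ ∀ b, inDS lam b → T b = {b.1}) :
    ∃ T'', (IsSSVT n lam T'' ∧ SRestrictedBy lam μ T'') ∧
      Msum n lam T'' < Msum n lam T ∧
      ExcStepBC μ (sfmap n lam T'') (sfmap n lam T) := by
  classical
  push_neg at hnm
  obtain ⟨b0, hb0, hneq⟩ := hnm
  obtain ⟨b01, b02⟩ := b0
  obtain ⟨d0, rfl⟩ : ∃ d0, b02 = b01 + d0 :=
    ⟨b02 - b01, by have := (inDS_def.mp hb0).2.1; omega⟩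
  have hx0 : ∃ x ∈ T (b01, b01 + d0), x ≠ b01 := by
    by_contra hcon
    push_neg at hcon
    apply hneq
    apply Finset.eq_singleton_iff_unique_mem.mpr
    obtain ⟨c, hcm⟩ := hT.1 _ hb0
    have hcb := hcon c hcm
    exact ⟨hcb ▸ hcm, hcon⟩
  obtain ⟨x0, hx0m, hx0ne⟩ := hx0
  have hx0row : b01 ≤ x0 := entry_row_le hlam hT b01 d0 x0 hb0 hx0m
  set Pe : ℕ → Prop := fun e => ∃ p dd, inDS lam (p, p + dd) ∧ p + e ∈ T (p, p + dd)
    with hPe_def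
  have hPe0 : Pe (x0 - b01) :=
    ⟨b01, d0, hb0, by rw [show b01 + (x0 - b01) = x0 by omega]; exact hx0m⟩
  have hPbound : ∀ e, Pe e → e ≤ n := by
    rintro e ⟨p, dd, hb, hm⟩
    have hrow := entry_row_le hlam hT p dd _ hb hm
    have := (hT.2.1 _ hb (p + e) hm).2; omega
  set e := Nat.findGreatest Pe n with he_def
  have he1 : 1 ≤ e := le_trans (by omega) (Nat.le_findGreatest (hPbound _ hPe0) hPe0)
  have hPee : Pe e := Nat.findGreatest_spec (hPbound _ hPe0) hPe0
  have hemax : ∀ p dd y, inDS lam (p, p + dd) → y ∈ T (p, p + dd) → y - p ≤ e := by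
    intro p dd y hb hy
    have hrow := entry_row_le hlam hT p dd y hb hy
    have hPy : Pe (y - p) := ⟨p, dd, hb, by rw [show p + (y - p) = y by omega]; exact hy⟩
    exact Nat.le_findGreatest (hPbound _ hPy) hPy
  have hex_r : ∃ p, ∃ dd, inDS lam (p, p + dd) ∧ p + e ∈ T (p, p + dd) := hPee
  obtain ⟨r, hex_d, hrmin⟩ :
      ∃ r, (∃ dd, inDS lam (r, r + dd) ∧ r + e ∈ T (r, r + dd)) ∧
        ∀ p', p' < r → ¬ ∃ dd, inDS lam (p', p' + dd) ∧ p' + e ∈ T (p', p' + dd) :=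
    ⟨Nat.find hex_r, Nat.find_spec hex_r, fun p' h => Nat.find_min hex_r h⟩
  obtain ⟨d, ⟨hBox, hxT⟩, hdmin⟩ :
      ∃ d, (inDS lam (r, r + d) ∧ r + e ∈ T (r, r + d)) ∧
        ∀ d', d' < d → ¬ (inDS lam (r, r + d') ∧ r + e ∈ T (r, r + d')) :=
    ⟨Nat.find hex_d, Nat.find_spec hex_d, fun d' h => Nat.find_min hex_d h⟩
  have hr1 : 1 ≤ r := (inDS_def.mp hBox).1
  obtain ⟨x, hx_def⟩ : ∃ x, x = r + e := ⟨r + e, rfl⟩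
  rw [← hx_def] at hxT
  have hdmin : ∀ d', d' < d → ¬ (inDS lam (r, r + d') ∧ x ∈ T (r, r + d')) := by
    rw [hx_def]; exact hdmin
  have hx2 : 2 ≤ x := by omega
  have hxn : x ≤ n := (hT.2.1 _ hBox x hxT).2
  have hμx : d + 1 ≤ μ x := by
    have := hR r (r + d) hBox x hxT; omega
  have hμx1 : d + 2 ≤ μ (x - 1) := by
    have hst : μ (x - 1 + 1) < μ (x - 1) :=
      sp_strict hμ (by omega) (by rw [show x - 1 + 1 = x by omega]; omega)
    rw [show x - 1 + 1 = x by omega] at hst; omega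
  have fb : ∀ q ee, ee + 1 = d → inDS lam (q, q + ee) → x ∉ T (q, q + ee) := by
    intro q ee hee hq hmem'
    rcases lt_trichotomy q r with h | h | h
    · have := hemax q ee x hq hmem'; omega
    · rw [h] at hq hmem'
      exact hdmin ee (by omega) ⟨hq, hmem'⟩
    · have hBox' : inDS lam (q, q + ee) := hq
      have hB2 : inDS lam (r, r + (ee + 1)) := by rw [hee]; exact hBox
      have hxT2 : x ∈ T (r, r + (ee + 1)) := by rw [hee]; exact hxT
      have := hook_lt hlam hT h hB2 hq hxT2 hmem'
      omega
  have fc : ∀ q, inDS lam (q, q + (d + 1)) → x - 1 ∉ T (q, q + (d + 1)) := by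
    intro q hq hmem'
    have hqx := entry_row_le hlam hT q (d + 1) (x - 1) hq hmem'
    rcases lt_trichotomy q r with h | h | h
    · have hle' := hemax q (d + 1) (x - 1) hq hmem'
      exact hrmin q (by omega)
        ⟨d + 1, hq, by rw [show q + e = x - 1 by omega]; exact hmem'⟩
    · rw [h] at hq hmem'
      have hrow := hT.2.2.2.1 r (r + d) hBox hq x hxT (x - 1) hmem'
      omega
    · have := antihook_lt hlam hT h hBox hq hxT hmem'
      omega
  have fd : ∀ q, inDS lam (q, q + d) → x - 1 ∈ T (q, q + d) → q = r := by
    intro q hq hmem'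
    rcases lt_trichotomy q r with h | h | h
    · have hle' := hemax q d (x - 1) hq hmem'
      have hqx := entry_row_le hlam hT q d (x - 1) hq hmem'
      exact absurd ⟨d, hq, by rw [show q + e = x - 1 by omega]; exact hmem'⟩
        (hrmin q (by omega))
    · exact h
    · exfalso
      have := diag_lt_gen hlam hT q r d x (x - 1) h hBox hq hxT hmem'
      omega
  have hxC : (x, x + d) ∈ sfmap n lam T :=
    (mem_sfmap_diag hlam hμ hμ1 hle).mpr ⟨r, hBox, hxT⟩
  have hnotin_b : ∀ c : ℕ, c + 1 = x + d → (x, c) ∉ sfmap n lam T := by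
    intro c hcx hmm'
    obtain ⟨q, ee, hq, hqm, heq⟩ := (mem_sfmap hlam hμ hμ1 hle).mp hmm'
    exact fb q ee (by omega) hq hqm
  have hnotin_c : (x - 1, x + d) ∉ sfmap n lam T := by
    intro hmm'
    obtain ⟨q, ee, hq, hqm, heq⟩ := (mem_sfmap hlam hμ hμ1 hle).mp hmm'
    have hee : ee = d + 1 := by omega
    subst hee
    exact fc q hq hqm
  by_cases hcm : x - 1 ∈ T (r, r + d)
  · -- type 2 reverse (delete x)
    have hval := update_valid (μ := μ) hT hR hBox ((T (r, r + d)).erase x)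
      ⟨x - 1, Finset.mem_erase.mpr ⟨by omega, hcm⟩⟩
      (fun y hy => hT.2.1 _ hBox y (Finset.mem_of_mem_erase hy))
      (fun y hy => hR r (r + d) hBox y (Finset.mem_of_mem_erase hy))
      (by
        intro z hz hin y hy
        have hrow := hT.2.2.2.1 r (r + d - 1) hin
          (by rw [show r + d - 1 + 1 = r + d by omega]; exact hBox) z hz
        rw [show r + d - 1 + 1 = r + d by omega] at hrow
        exact hrow y (Finset.mem_of_mem_erase hy))
      (fun y hy hin z hz =>
        hT.2.2.2.1 r (r + d) hBox hin y (Finset.mem_of_mem_erase hy) z hz)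
      (by
        intro z hz hin y hy
        have hcol := hT.2.2.2.2 (r - 1) (r + d) hin
          (by rw [show r - 1 + 1 = r by omega]; exact hBox) z hz
        rw [show r - 1 + 1 = r by omega] at hcol
        exact hcol y (Finset.mem_of_mem_erase hy))
      (fun y hy hin z hz =>
        hT.2.2.2.2 r (r + d) hBox hin y (Finset.mem_of_mem_erase hy) z hz)
    refine ⟨_, hval, ?_, ?_⟩
    · apply Msum_update_lt hlam hμ hμ1 hle hBox
      have h2 : x + ∑ y ∈ (T (r, r + d)).erase x, y = ∑ y ∈ T (r, r + d), y :=
        Finset.add_sum_erase _ (fun y => y) hxT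
      omega
    · rw [sfmap_erase hlam hμ hμ1 hle hT hBox hxT]
      rcases Nat.eq_zero_or_pos d with hd0 | hd1
      · subst hd0
        refine Or.inr ⟨x - 1, ?_, ?_, ?_, ?_, ?_, Or.inr ?_⟩
        · refine Finset.mem_erase.mpr ⟨?_, ?_⟩
          · intro h; rw [Prod.mk.injEq] at h; omega
          · exact (mem_sfmap hlam hμ hμ1 hle).mpr ⟨r, 0, hBox, hcm, by omega⟩
        · rw [show x - 1 + 1 = x by omega]
          exact inDS_def.mpr ⟨by omega, by omega, by omega⟩
        · rw [show x - 1 + 1 = x by omega]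
          intro h
          exact hnotin_c (Finset.mem_erase.mp h).2
        · rw [show x - 1 + 1 = x by omega]
          exact inDS_def.mpr ⟨by omega, by omega, by omega⟩
        · rw [show x - 1 + 1 = x by omega]
          intro h
          exact (Finset.mem_erase.mp h).1 (by rw [Prod.mk.injEq]; omega)
        · rw [show x - 1 + 1 = x by omega, finset_union_singleton _ _]
          rw [show (x, x) = (x, x + 0) by rw [Prod.mk.injEq]; omega]
          rw [Finset.insert_erase hxC]
      · refine Or.inl ⟨x - 1, x - 1 + d, by omega, ?_, ?_, ?_, ?_, ?_, ?_, ?_, Or.inr ?_⟩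
        · refine Finset.mem_erase.mpr ⟨?_, ?_⟩
          · intro h; rw [Prod.mk.injEq] at h; omega
          · exact (mem_sfmap hlam hμ hμ1 hle).mpr ⟨r, d, hBox, hcm, rfl⟩
        · rw [show x - 1 + 1 = x by omega]
          exact inDS_def.mpr ⟨by omega, by omega, by omega⟩
        · rw [show x - 1 + 1 = x by omega]
          intro h
          exact hnotin_b (x - 1 + d) (by omega) (Finset.mem_erase.mp h).2
        · exact inDS_def.mpr ⟨by omega, by omega, by omega⟩
        · intro h
          exact hnotin_c (by
            rw [show x - 1 + d + 1 = x + d by omega] at h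
            exact (Finset.mem_erase.mp h).2)
        · rw [show x - 1 + 1 = x by omega, show x - 1 + d + 1 = x + d by omega]
          exact inDS_def.mpr ⟨by omega, by omega, by omega⟩
        · rw [show x - 1 + 1 = x by omega, show x - 1 + d + 1 = x + d by omega]
          exact Finset.notMem_erase _ _
        · rw [show x - 1 + 1 = x by omega, show x - 1 + d + 1 = x + d by omega,
            finset_union_singleton _ _, Finset.insert_erase hxC]
  · -- type 1 reverse (decrement x)
    have fdd : ∀ q, inDS lam (q, q + d) → x - 1 ∉ T (q, q + d) := by
      intro q hq hm'
      have := fd q hq hm'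
      subst this
      exact hcm hm'
    have hval := update_valid (μ := μ) hT hR hBox
      (insert (x - 1) ((T (r, r + d)).erase x))
      ⟨x - 1, Finset.mem_insert_self _ _⟩
      (by
        intro y hy
        rcases Finset.mem_insert.mp hy with rfl | hyT
        · exact ⟨by omega, by omega⟩
        · exact hT.2.1 _ hBox y (Finset.mem_of_mem_erase hyT))
      (by
        intro y hy
        rcases Finset.mem_insert.mp hy with rfl | hyT
        · omega
        · exact hR r (r + d) hBox y (Finset.mem_of_mem_erase hyT))
      (by
        intro z hz hin y hy
        have hd1 : 1 ≤ d := by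
          obtain ⟨_, h2, _⟩ := inDS_def.mp hin; omega
        have hrow := hT.2.2.2.1 r (r + d - 1) hin
          (by rw [show r + d - 1 + 1 = r + d by omega]; exact hBox) z hz
        rw [show r + d - 1 + 1 = r + d by omega] at hrow
        rcases Finset.mem_insert.mp hy with rfl | hyT
        · have hzx : z ≤ x := hrow x hxT
          have hzne : z ≠ x := by
            intro hzeq
            subst hzeq
            exact fb r (d - 1) (by omega)
              (by rw [show r + (d - 1) = r + d - 1 by omega]; exact hin)
              (by rw [show r + (d - 1) = r + d - 1 by omega]; exact hz)
          omega
        · exact hrow y (Finset.mem_of_mem_erase hyT))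
      (by
        intro y hy hin z hz
        rcases Finset.mem_insert.mp hy with rfl | hyT
        · have := hT.2.2.2.1 r (r + d) hBox hin x hxT z hz
          omega
        · exact hT.2.2.2.1 r (r + d) hBox hin y (Finset.mem_of_mem_erase hyT) z hz)
      (by
        intro z hz hin y hy
        have hcol := hT.2.2.2.2 (r - 1) (r + d) hin
          (by rw [show r - 1 + 1 = r by omega]; exact hBox) z hz
        rw [show r - 1 + 1 = r by omega] at hcol
        rcases Finset.mem_insert.mp hy with rfl | hyT
        · have hzx : z < x := hcol x hxT
          have hzne : z ≠ x - 1 := by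
            intro hzeq
            subst hzeq
            exact fc (r - 1)
              (by rw [show r - 1 + (d + 1) = r + d by omega]; exact hin)
              (by rw [show r - 1 + (d + 1) = r + d by omega]; exact hz)
          omega
        · exact hcol y (Finset.mem_of_mem_erase hyT))
      (by
        intro y hy hin z hz
        rcases Finset.mem_insert.mp hy with rfl | hyT
        · have := hT.2.2.2.2 r (r + d) hBox hin x hxT z hz
          omega
        · exact hT.2.2.2.2 r (r + d) hBox hin y (Finset.mem_of_mem_erase hyT) z hz)
    have hnotin_d : (x - 1, x - 1 + d) ∉ sfmap n lam T := by
      intro hmm'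
      obtain ⟨q, ee, hq, hqm, heq⟩ := (mem_sfmap hlam hμ hμ1 hle).mp hmm'
      have hee : ee = d := by omega
      subst hee
      exact fdd q hq hqm
    refine ⟨_, hval, ?_, ?_⟩
    · apply Msum_update_lt hlam hμ hμ1 hle hBox
      have hnm' : x - 1 ∉ (T (r, r + d)).erase x :=
        fun h => hcm (Finset.mem_of_mem_erase h)
      have h1 : ∑ y ∈ insert (x - 1) ((T (r, r + d)).erase x), y =
          (x - 1) + ∑ y ∈ (T (r, r + d)).erase x, y := Finset.sum_insert hnm'
      have h2 : x + ∑ y ∈ (T (r, r + d)).erase x, y = ∑ y ∈ T (r, r + d), y :=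
        Finset.add_sum_erase _ (fun y => y) hxT
      omega
    · rw [sfmap_replace hlam hμ hμ1 hle hT hBox hxT]
      rcases Nat.eq_zero_or_pos d with hd0 | hd1
      · subst hd0
        refine Or.inr ⟨x - 1, ?_, ?_, ?_, ?_, ?_, Or.inl ?_⟩
        · rw [show (x - 1, x - 1) = (x - 1, x - 1 + 0) by rw [Prod.mk.injEq]; omega]
          exact Finset.mem_insert_self _ _
        · rw [show x - 1 + 1 = x by omega]
          exact inDS_def.mpr ⟨by omega, by omega, by omega⟩
        · rw [show x - 1 + 1 = x by omega]
          intro h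
          rcases Finset.mem_insert.mp h with heq | h2
          · rw [Prod.mk.injEq] at heq; omega
          · exact hnotin_c (Finset.mem_erase.mp h2).2
        · rw [show x - 1 + 1 = x by omega]
          exact inDS_def.mpr ⟨by omega, by omega, by omega⟩
        · rw [show x - 1 + 1 = x by omega]
          intro h
          rcases Finset.mem_insert.mp h with heq | h2
          · rw [Prod.mk.injEq] at heq; omega
          · exact (Finset.mem_erase.mp h2).1 (by rw [Prod.mk.injEq]; omega)
        · rw [show x - 1 + 1 = x by omega]
          rw [show (x - 1, x - 1) = (x - 1, x - 1 + 0) by rw [Prod.mk.injEq]; omega]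
          rw [Finset.erase_insert (fun h => hnotin_d (Finset.mem_of_mem_erase h))]
          rw [finset_union_singleton _ _]
          rw [show (x, x) = (x, x + 0) by rw [Prod.mk.injEq]; omega]
          rw [Finset.insert_erase hxC]
      · refine Or.inl ⟨x - 1, x - 1 + d, by omega, ?_, ?_, ?_, ?_, ?_, ?_, ?_, Or.inl ?_⟩
        · exact Finset.mem_insert_self _ _
        · rw [show x - 1 + 1 = x by omega]
          exact inDS_def.mpr ⟨by omega, by omega, by omega⟩
        · rw [show x - 1 + 1 = x by omega]
          intro h
          rcases Finset.mem_insert.mp h with heq | h2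
          · rw [Prod.mk.injEq] at heq; omega
          · exact hnotin_b (x - 1 + d) (by omega) (Finset.mem_erase.mp h2).2
        · exact inDS_def.mpr ⟨by omega, by omega, by omega⟩
        · intro h
          rcases Finset.mem_insert.mp h with heq | h2
          · rw [Prod.mk.injEq] at heq; omega
          · exact hnotin_c (by
              rw [show x - 1 + d + 1 = x + d by omega] at h2
              exact (Finset.mem_erase.mp h2).2)
        · rw [show x - 1 + 1 = x by omega, show x - 1 + d + 1 = x + d by omega]
          exact inDS_def.mpr ⟨by omega, by omega, by omega⟩
        · rw [show x - 1 + 1 = x by omega, show x - 1 + d + 1 = x + d by omega]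
          intro h
          rcases Finset.mem_insert.mp h with heq | h2
          · rw [Prod.mk.injEq] at heq; omega
          · exact (Finset.mem_erase.mp h2).1 rfl
        · rw [show x - 1 + 1 = x by omega, show x - 1 + d + 1 = x + d by omega]
          rw [Finset.erase_insert (fun h => hnotin_d (Finset.mem_of_mem_erase h))]
          rw [finset_union_singleton _ _, Finset.insert_erase hxC]

end Rev

section Inj

variable {n rlam rμ : ℕ} {lam μ : ℕ → ℕ}

lemma inj_aux (hlam : IsStrictPartition rlam lam) (hμ : IsStrictPartition rμ μ)
    (hμ1 : μ 1 ≤ n) (hle : ∀ i, lam i ≤ μ i) {T S : ℕ × ℕ → Finset ℕ}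
    (hT : IsSSVT n lam T) (hS : IsSSVT n lam S)
    (hf : sfmap n lam T = sfmap n lam S) {x d r s : ℕ} (hrs : r < s)
    (hbr : inDS lam (r, r + d)) (hbs : inDS lam (s, s + d))
    (hxT : x ∈ T (r, r + d)) (hxS : x ∈ S (s, s + d))
    (hmin1 : ∀ y, y < x → ∀ d' q q', inDS lam (q, q + d') → inDS lam (q', q' + d') →
      y ∈ T (q, q + d') → y ∈ S (q', q' + d') → q = q')
    (hmin2 : ∀ d', d' < d → ∀ q q', inDS lam (q, q + d') → inDS lam (q', q' + d') →
      x ∈ T (q, q + d') → x ∈ S (q', q' + d') → q = q') : False := by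
  have hr1 : 1 ≤ r := (inDS_def.mp hbr).1
  rcases Nat.eq_zero_or_pos d with rfl | hd
  · -- d = 0
    have hls : 1 ≤ lam s := by
      have := (inDS_def.mp hbs).2.2; omega
    have hlamr : 2 ≤ lam r := by
      have h1 := sp_le hlam r s hr1 (by omega) hls
      omega
    have hbU : inDS lam (r, r + 1) := inDS_def.mpr ⟨hr1, by omega, by omega⟩
    obtain ⟨y, hy⟩ := hS.1 _ hbU
    have hb1 : inDS lam (r + 1, r + 1 + 0) := by
      have hss : lam s ≤ lam (r + 1) := sp_pos_le hlam (by omega) (by omega) hls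
      exact inDS_def.mpr ⟨by omega, by omega, by omega⟩
    have hyx : y < x := by
      rcases Nat.lt_or_ge (r + 1) s with hlt | hge
      · obtain ⟨w, hw⟩ := hS.1 _ hb1
        have h1 : y < w := by
          have := hS.2.2.2.2 r (r + 1) hbU (by
            rw [show r + 1 + 0 = r + 1 by omega] at hb1; exact hb1) y hy w (by
            rw [show r + 1 + 0 = r + 1 by omega] at hw; exact hw)
          exact this
        have h2 : w < x := diag_lt_gen hlam hS s (r + 1) 0 w x hlt hb1 hbs hw hxS
        omega
      · have hseq : s = r + 1 := by omega
        subst hseq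
        have := hS.2.2.2.2 r (r + 1) hbU (by
          rw [show r + 1 + 0 = r + 1 by omega] at hbs; exact hbs) y hy x (by
          rw [show r + 1 + 0 = r + 1 by omega] at hxS; exact hxS)
        exact this
    have hyT : y ∈ T (r, r + 1) := by
      have hyf : (y, y + 1) ∈ sfmap n lam S :=
        (mem_sfmap_diag hlam hμ hμ1 hle).mpr ⟨r, hbU, hy⟩
      rw [← hf] at hyf
      obtain ⟨q, hq, hyT'⟩ := (mem_sfmap_diag hlam hμ hμ1 hle).mp hyf
      have := hmin1 y hyx 1 q r hq hbU hyT' hy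
      subst this
      exact hyT'
    have := hT.2.2.2.1 r r (by
      rw [show r + 0 = r by omega] at hbr; exact hbr) hbU x (by
      rw [show r + 0 = r by omega] at hxT; exact hxT) y hyT
    omega
  · -- d ≥ 1
    have hbL : inDS lam (s, s + (d - 1)) := by
      have h1 := (inDS_def.mp hbs).2.2
      have h2 := (inDS_def.mp hbs).1
      exact inDS_def.mpr ⟨by omega, by omega, by omega⟩
    obtain ⟨z, hz⟩ := hS.1 _ hbL
    have hzx : z ≤ x := by
      have := hS.2.2.2.1 s (s + (d - 1)) hbL (by
        rw [show s + (d - 1) + 1 = s + d by omega]; exact hbs) z hz x (by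
        rw [show s + (d - 1) + 1 = s + d by omega]; exact hxS)
      exact this
    have hzT : z ∈ T (s, s + (d - 1)) := by
      have hzf : (z, z + (d - 1)) ∈ sfmap n lam S :=
        (mem_sfmap_diag hlam hμ hμ1 hle).mpr ⟨s, hbL, hz⟩
      rw [← hf] at hzf
      obtain ⟨q, hq, hzT'⟩ := (mem_sfmap_diag hlam hμ hμ1 hle).mp hzf
      rcases Nat.lt_or_ge z x with hlt | hge
      · have := hmin1 z hlt (d - 1) q s hq hbL hzT' hz
        subst this; exact hzT'
      · have hzeq : z = x := by omega
        subst hzeq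
        have := hmin2 (d - 1) (by omega) q s hq hbL hzT' hz
        subst this; exact hzT'
    have hbr' : inDS lam (r, r + (d - 1) + 1) := by
      rw [show r + (d - 1) + 1 = r + d by omega]; exact hbr
    have hxT' : x ∈ T (r, r + (d - 1) + 1) := by
      rw [show r + (d - 1) + 1 = r + d by omega]; exact hxT
    have : x < z := hook_lt hlam hT hrs hbr' hbL hxT' hzT
    omega

lemma inj (hlam : IsStrictPartition rlam lam) (hμ : IsStrictPartition rμ μ)
    (hμ1 : μ 1 ≤ n) (hle : ∀ i, lam i ≤ μ i) {T S : ℕ × ℕ → Finset ℕ}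
    (hT : IsSSVT n lam T) (hS : IsSSVT n lam S)
    (hf : sfmap n lam T = sfmap n lam S) : T = S := by
  classical
  by_contra hne
  have hbad : ∃ x, ∃ d q q', inDS lam (q, q + d) ∧ inDS lam (q', q' + d) ∧
      x ∈ T (q, q + d) ∧ x ∈ S (q', q' + d) ∧ q ≠ q' := by
    by_contra hall
    push_neg at hall
    apply hne
    funext b
    obtain ⟨b1, b2⟩ := b
    by_cases hb : inDS lam (b1, b2)
    · obtain ⟨dd, rfl⟩ : ∃ dd, b2 = b1 + dd :=
        ⟨b2 - b1, by have := (inDS_def.mp hb).2.1; omega⟩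
      ext a
      constructor
      · intro ha
        have haf : (a, a + dd) ∈ sfmap n lam T :=
          (mem_sfmap_diag hlam hμ hμ1 hle).mpr ⟨b1, hb, ha⟩
        rw [hf] at haf
        obtain ⟨q', hq', haS⟩ := (mem_sfmap_diag hlam hμ hμ1 hle).mp haf
        have := hall a dd b1 q' hb hq' ha haS
        rw [this]; exact haS
      · intro ha
        have haf : (a, a + dd) ∈ sfmap n lam S :=
          (mem_sfmap_diag hlam hμ hμ1 hle).mpr ⟨b1, hb, ha⟩
        rw [← hf] at haf
        obtain ⟨q, hq, haT⟩ := (mem_sfmap_diag hlam hμ hμ1 hle).mp haf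
        have := hall a dd q b1 hq hb haT ha
        rw [← this]; exact haT
    · rw [hT.2.2.1 _ hb, hS.2.2.1 _ hb]
  obtain ⟨x, hxspec, hxmin⟩ :
      ∃ x, (∃ d q q', inDS lam (q, q + d) ∧ inDS lam (q', q' + d) ∧
          x ∈ T (q, q + d) ∧ x ∈ S (q', q' + d) ∧ q ≠ q') ∧
        ∀ y, y < x → ¬ ∃ d q q', inDS lam (q, q + d) ∧ inDS lam (q', q' + d) ∧
          y ∈ T (q, q + d) ∧ y ∈ S (q', q' + d) ∧ q ≠ q' :=
    ⟨Nat.find hbad, Nat.find_spec hbad, fun y h => Nat.find_min hbad h⟩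
  obtain ⟨d, hdspec, hdmin⟩ :
      ∃ d, (∃ q q', inDS lam (q, q + d) ∧ inDS lam (q', q' + d) ∧
          x ∈ T (q, q + d) ∧ x ∈ S (q', q' + d) ∧ q ≠ q') ∧
        ∀ d', d' < d → ¬ ∃ q q', inDS lam (q, q + d') ∧ inDS lam (q', q' + d') ∧
          x ∈ T (q, q + d') ∧ x ∈ S (q', q' + d') ∧ q ≠ q' :=
    ⟨Nat.find hxspec, Nat.find_spec hxspec, fun d' h => Nat.find_min hxspec h⟩
  obtain ⟨q, q', h1, h2, h3, h4, hqq⟩ := hdspec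
  have hmin1T : ∀ y, y < x → ∀ d' a a', inDS lam (a, a + d') → inDS lam (a', a' + d') →
      y ∈ T (a, a + d') → y ∈ S (a', a' + d') → a = a' := by
    intro y hy d' a a' ha ha' hyT hyS
    by_contra hcon
    exact hxmin y hy ⟨d', a, a', ha, ha', hyT, hyS, hcon⟩
  have hmin2T : ∀ d', d' < d → ∀ a a', inDS lam (a, a + d') → inDS lam (a', a' + d') →
      x ∈ T (a, a + d') → x ∈ S (a', a' + d') → a = a' := by
    intro d' hd' a a' ha ha' hxT' hxS'
    by_contra hcon
    exact hdmin d' hd' ⟨a, a', ha, ha', hxT', hxS', hcon⟩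
  rcases Nat.lt_or_ge q q' with h | h
  · exact inj_aux hlam hμ hμ1 hle hT hS hf h h1 h2 h3 h4 hmin1T hmin2T
  · have hlt : q' < q := by omega
    refine inj_aux hlam hμ hμ1 hle hS hT hf.symm hlt h2 h1 h4 h3 ?_ ?_
    · intro y hy d' a a' ha ha' hyS hyT
      exact (hmin1T y hy d' a' a ha' ha hyT hyS).symm
    · intro d' hd' a a' ha ha' hxS' hxT'
      exact (hmin2T d' hd' a' a ha' ha hxT' hxS').symm

end Inj

noncomputable def T0 (lam : ℕ → ℕ) : ℕ × ℕ → Finset ℕ :=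
  fun b => if 1 ≤ b.1 ∧ b.1 ≤ b.2 ∧ b.2 + 1 ≤ b.1 + lam b.1 then ({b.1} : Finset ℕ) else ∅

lemma T0_pos {lam : ℕ → ℕ} {b : ℕ × ℕ} (hb : inDS lam b) : T0 lam b = {b.1} := if_pos hb

lemma T0_neg {lam : ℕ → ℕ} {b : ℕ × ℕ} (hb : ¬ inDS lam b) : T0 lam b = ∅ := if_neg hb

section Fin

variable {n rlam rμ : ℕ} {lam μ : ℕ → ℕ}

lemma minimal_sfmap (hlam : IsStrictPartition rlam lam) (hμ : IsStrictPartition rμ μ)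
    (hμ1 : μ 1 ≤ n) (hle : ∀ i, lam i ≤ μ i) {T : ℕ × ℕ → Finset ℕ}
    (hmin : ∀ b, inDS lam b → T b = {b.1}) : sfmap n lam T = DfinS n lam := by
  ext ⟨a, c⟩
  rw [mem_sfmap hlam hμ hμ1 hle, mem_DfinS hlam hμ hμ1 hle]
  constructor
  · rintro ⟨p, dd, hb, ha, rfl⟩
    rw [hmin _ hb, Finset.mem_singleton] at ha
    subst ha
    exact hb
  · intro hb
    have h1 := hb.2.1
    refine ⟨a, c - a, ?_, ?_, by omega⟩
    · rw [show a + (c - a) = c by omega]; exact hb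
    · rw [show a + (c - a) = c by omega, hmin _ hb]
      exact Finset.mem_singleton_self _

lemma T0_valid (hlam : IsStrictPartition rlam lam) (hμ : IsStrictPartition rμ μ)
    (hμ1 : μ 1 ≤ n) (hle : ∀ i, lam i ≤ μ i) :
    IsSSVT n lam (T0 lam) ∧ SRestrictedBy lam μ (T0 lam) := by
  classical
  refine ⟨⟨?_, ?_, ?_, ?_, ?_⟩, ?_⟩
  · intro b hb; rw [T0_pos hb]; exact ⟨b.1, Finset.mem_singleton_self _⟩
  · intro b hb x hx
    rw [T0_pos hb, Finset.mem_singleton] at hx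
    subst hx
    obtain ⟨h1, h2, h3⟩ := hb
    refine ⟨h1, ?_⟩
    have h4 := sp_le hlam 1 b.1 le_rfl h1 (by omega)
    have h5 := hle 1
    omega
  · intro b hb; rw [T0_neg hb]
  · intro i j h1 h2 x hx y hy
    rw [T0_pos h1, Finset.mem_singleton] at hx
    rw [T0_pos h2, Finset.mem_singleton] at hy
    subst hx; subst hy; omega
  · intro i j h1 h2 x hx y hy
    rw [T0_pos h1, Finset.mem_singleton] at hx
    rw [T0_pos h2, Finset.mem_singleton] at hy
    subst hx; subst hy; exact Nat.lt_succ_self _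
  · intro i j h1 x hx
    rw [T0_pos h1, Finset.mem_singleton] at hx
    have hx' : x = i := hx
    rw [hx']
    obtain ⟨ha, hb', hc⟩ := inDS_def.mp h1
    have h5 := hle i
    omega

lemma mapsTo_aux (hlam : IsStrictPartition rlam lam) (hμ : IsStrictPartition rμ μ)
    (hμ1 : μ 1 ≤ n) (hle : ∀ i, lam i ≤ μ i) :
    ∀ N (T : ℕ × ℕ → Finset ℕ), Msum n lam T ≤ N →
      IsSSVT n lam T ∧ SRestrictedBy lam μ T →
      Relation.ReflTransGen (ExcStepBC μ) (DfinS n lam) (sfmap n lam T) := by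
  intro N
  induction N with
  | zero =>
    intro T hM ⟨hT, hR⟩
    by_cases hmin : ∀ b, inDS lam b → T b = {b.1}
    · rw [minimal_sfmap hlam hμ hμ1 hle hmin]
    · obtain ⟨T'', _, hlt, _⟩ := rev hlam hμ hμ1 hle hT hR hmin
      omega
  | succ N ih =>
    intro T hM ⟨hT, hR⟩
    by_cases hmin : ∀ b, inDS lam b → T b = {b.1}
    · rw [minimal_sfmap hlam hμ hμ1 hle hmin]
    · obtain ⟨T'', hval, hlt, hstep⟩ := rev hlam hμ hμ1 hle hT hR hmin
      exact (ih T'' (by omega) hval).tail hstep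

end Fin


/-- The map `f(T) = {(x, x+j−i)}` is a bijection from the set of set-valued shifted
tableaux of shape `lam` restricted by `μ` onto the set of excited shifted Young diagrams
of `D'_lam` in `D'_μ` (with the type `Bₙ`/`Cₙ` excitation rules). -/
theorem stmt_19 (n rlam rμ : ℕ) (hn : 1 ≤ n) (lam μ : ℕ → ℕ)
    (hlam : IsStrictPartition rlam lam) (hμ : IsStrictPartition rμ μ)
    (hμ1 : μ 1 ≤ n) (hle : ∀ i, lam i ≤ μ i) :
    Set.BijOn (sfmap n lam)
      {T | IsSSVT n lam T ∧ SRestrictedBy lam μ T}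
      {C | Relation.ReflTransGen (ExcStepBC μ) (DfinS n lam) C} := by
  classical
  refine ⟨?_, ?_, ?_⟩
  · rintro T ⟨hT, hR⟩
    exact mapsTo_aux hlam hμ hμ1 hle (Msum n lam T) T le_rfl ⟨hT, hR⟩
  · rintro T ⟨hT, hRT⟩ S ⟨hS, hRS⟩ hf
    exact inj hlam hμ hμ1 hle hT hS hf
  · intro C hC
    simp only [Set.mem_setOf_eq] at hC
    induction hC with
    | refl =>
      refine ⟨T0 lam, T0_valid hlam hμ hμ1 hle, ?_⟩
      apply minimal_sfmap hlam hμ hμ1 hle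
      intro b hb
      exact T0_pos hb
    | @tail B C hreach hstep ih =>
      obtain ⟨T, hTmem, hfT⟩ := ih
      obtain ⟨hT, hR⟩ := hTmem
      rw [← hfT] at hstep
      obtain ⟨T', hval, hfeq⟩ := fwd hlam hμ hμ1 hle hT hR hstep
      exact ⟨T', hval, hfeq⟩
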